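/- Let p > 3 be prime, n = 2m, d = s(p^m − 1) with gcd(s, p^m + 1) = t and (p^m + 1)/t > 3. If 6t does not divide p^m + 1, then each of (x+1)^d − x^d = 1 and (x+1)^d − x^d = −1 has exactly one solution in F_{p^n}; if 6t divides p^m + 1, each has exactly 2t^2 + 1 solutions. -/

import Mathlib

open Finset

lemma card_pow_roots (F : Type) [Field F] [Fintype F] [DecidableEq F] {k : ℕ}
    (hk : 0 < k) (hdvd : k ∣ Fintype.card F - 1) :
    (Finset.univ.filter fun x : F => x ^ k = 1).card = k := by
  obtain ⟨g, hg⟩ := IsCyclic.exists_generator (α := Fˣ)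
  have hM : orderOf g = Fintype.card F - 1 := by
    rw [orderOf_eq_card_of_forall_mem_zpowers hg, Nat.card_eq_fintype_card,
      Fintype.card_units]
  set M := Fintype.card F - 1 with hMdef
  have hM0 : 0 < M := by
    have := Fintype.one_lt_card (α := F)
    omega
  have hord : orderOf (g ^ (M / k)) = k := by
    rw [orderOf_pow, hM]
    rw [Nat.gcd_eq_right (Nat.div_dvd_of_dvd hdvd)]
    exact Nat.div_div_self hdvd hM0.ne'
  set ζu := g ^ (M / k)
  have hordF : orderOf ((ζu : Fˣ) : F) = k := by
    rw [orderOf_units]; exact hord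
  have hprim : IsPrimitiveRoot ((ζu : Fˣ) : F) k := by
    have := IsPrimitiveRoot.orderOf ((ζu : Fˣ) : F)
    rwa [hordF] at this
  have heq : (Finset.univ.filter fun x : F => x ^ k = 1) = Polynomial.nthRootsFinset k (1 : F) := by
    ext x
    simp [Polynomial.mem_nthRootsFinset hk]
  rw [heq, hprim.card_nthRootsFinset]

lemma exists_fiber_elt (F : Type) [Field F] [Fintype F] [DecidableEq F] {s N t : ℕ}
    (hs : 0 < s) (hN : 0 < N) (hNd : N ∣ Fintype.card F - 1) (ht : t = Nat.gcd s N)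
    (a : F) (ha : a ^ (N / t) = 1) :
    ∃ u : F, u ≠ 0 ∧ u ^ N = 1 ∧ u ^ s = a := by
  have ht0 : 0 < t := ht ▸ Nat.gcd_pos_of_pos_left _ hs
  have htN : t ∣ N := ht ▸ Nat.gcd_dvd_right s N
  have hts : t ∣ s := ht ▸ Nat.gcd_dvd_left s N
  set l := N / t with hl
  have hNtl : N = t * l := (Nat.mul_div_cancel' htN).symm
  have hl0 : 0 < l := Nat.div_pos (Nat.le_of_dvd hN htN) ht0
  have ha0 : a ≠ 0 := by
    intro h; rw [h, zero_pow hl0.ne'] at ha; exact zero_ne_one ha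
  have haN : a ^ N = 1 := by
    rw [hNtl, mul_comm, pow_mul, ha, one_pow]
  obtain ⟨g, hg⟩ := IsCyclic.exists_generator (α := Fˣ)
  have hM : orderOf g = Fintype.card F - 1 := by
    rw [orderOf_eq_card_of_forall_mem_zpowers hg, Nat.card_eq_fintype_card,
      Fintype.card_units]
  set M := Fintype.card F - 1 with hMdef
  have hM0 : 0 < M := by have := Fintype.one_lt_card (α := F); omega
  set au : Fˣ := Units.mk0 a ha0 with hau
  have hauN : au ^ N = 1 := by ext; push_cast; exact haN
  have haul : au ^ l = 1 := by ext; push_cast; exact ha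
  obtain ⟨j, hj⟩ : ∃ j : ℕ, g ^ j = au := by
    have := hg au
    rwa [← mem_powers_iff_mem_zpowers, Submonoid.mem_powers_iff] at this
  set K := M / N with hK
  have hMNK : M = N * K := (Nat.mul_div_cancel' hNd).symm
  have hKj : K ∣ j := by
    have h1 : g ^ (j * N) = 1 := by rw [pow_mul, hj, hauN]
    have h2 : M ∣ j * N := by rwa [← orderOf_dvd_iff_pow_eq_one, hM] at h1
    rw [hMNK, mul_comm N K] at h2
    have hN0 : 0 < N := hN
    exact (Nat.mul_dvd_mul_iff_right hN0).mp h2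
  obtain ⟨j₂, hj₂⟩ := hKj
  have htj₂ : t ∣ j₂ := by
    have h1 : g ^ (j * l) = 1 := by rw [pow_mul, hj, haul]
    have h2 : M ∣ j * l := by rwa [← orderOf_dvd_iff_pow_eq_one, hM] at h1
    rw [hMNK, hj₂, hNtl] at h2
    -- t*l*K ∣ K*j₂*l
    have h3 : t * l * K ∣ K * j₂ * l := h2
    have hK0 : 0 < K := by
      rcases Nat.eq_zero_or_pos K with h | h
      · exfalso; rw [h, mul_zero] at hMNK; omega
      · exact h
    have h4 : t ∣ j₂ * 1 := by
      have : (t * (l * K)) ∣ (j₂ * (l * K)) := by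
        calc t * (l * K) = t * l * K := by ring
        _ ∣ K * j₂ * l := h3
        _ = j₂ * (l * K) := by ring
      rw [mul_one]
      exact (Nat.mul_dvd_mul_iff_right (by positivity : 0 < l * K)).mp this
    simpa using h4
  obtain ⟨j₃, hj₃⟩ := htj₂
  set h : Fˣ := g ^ K with hh
  have hhN : h ^ (N : ℤ) = 1 := by
    have : g ^ M = 1 := by rw [← hM]; exact pow_orderOf_eq_one g
    rw [hh, ← zpow_natCast, ← zpow_mul]
    rw [show ((K : ℤ) * N) = (M : ℤ) by rw [hMNK]; push_cast; ring]
    rw [zpow_natCast, this]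
  have hmodN : ∀ c e : ℤ, e = N * c → h ^ e = 1 := by
    intro c e he
    simp only [he, zpow_mul, hhN, one_zpow]
  have hhau : h ^ ((t : ℤ) * j₃) = au := by
    rw [← hj, hj₂, hj₃, hh]
    rw [← zpow_natCast g (K * (t * j₃)), ← zpow_natCast g K, ← zpow_mul]
    congr 1
  set A := Nat.gcdA s N with hA
  set B := Nat.gcdB s N with hB
  have hbez : (t : ℤ) = s * A + N * B := by rw [ht]; exact Nat.gcd_eq_gcd_ab s N
  refine ⟨((h ^ (A * j₃) : Fˣ) : F), Units.ne_zero _, ?_, ?_⟩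
  · have : (h ^ (A * j₃)) ^ N = 1 := by
      rw [← zpow_natCast (h ^ (A * j₃)) N, ← zpow_mul]
      rw [mul_comm, zpow_mul, hhN, one_zpow]
    calc ((h ^ (A * j₃) : Fˣ) : F) ^ N = (((h ^ (A * j₃)) ^ N : Fˣ) : F) := by push_cast; ring
    _ = 1 := by rw [this]; rfl
  · have key : (h ^ (A * j₃)) ^ s = au := by
      rw [← zpow_natCast (h ^ (A * j₃)) s, ← zpow_mul]
      have : h ^ (A * j₃ * s) = h ^ ((t : ℤ) * j₃) * h ^ (A * j₃ * s - (t : ℤ) * j₃) := by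
        rw [← zpow_add]; congr 1; ring
      rw [this, hhau, hmodN (c := -B * j₃) (e := A * j₃ * s - (t : ℤ) * j₃) (by
        rw [hbez]; ring), mul_one]
    calc ((h ^ (A * j₃) : Fˣ) : F) ^ s = (((h ^ (A * j₃)) ^ s : Fˣ) : F) := by push_cast; ring
    _ = a := by rw [key]; rfl

lemma fiber_card (F : Type) [Field F] [Fintype F] [DecidableEq F] {s N t : ℕ}
    (hs : 0 < s) (hN : 0 < N) (hNd : N ∣ Fintype.card F - 1) (ht : t = Nat.gcd s N)
    (a : F) (ha : a ^ (N / t) = 1) :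
    (Finset.univ.filter fun u : F => u ^ N = 1 ∧ u ^ s = a).card = t := by
  have ht0 : 0 < t := ht ▸ Nat.gcd_pos_of_pos_left _ hs
  have htN : t ∣ N := ht ▸ Nat.gcd_dvd_right s N
  have hts : t ∣ s := ht ▸ Nat.gcd_dvd_left s N
  obtain ⟨u₀, hu0, huN, hus⟩ := exists_fiber_elt F hs hN hNd ht a ha
  rw [← card_pow_roots F ht0 (htN.trans hNd)]
  apply Finset.card_bij' (fun x _ => u₀⁻¹ * x) (fun w _ => u₀ * w)
  · intro x hx
    simp only [mem_filter, mem_univ, true_and] at hx ⊢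
    obtain ⟨hxN, hxs⟩ := hx
    have h1 : (u₀⁻¹ * x) ^ N = 1 := by
      rw [mul_pow, inv_pow, huN, hxN, inv_one, one_mul]
    have h2 : (u₀⁻¹ * x) ^ s = 1 := by
      have ha0 : a ≠ 0 := by
        intro h; rw [h] at hus
        exact hu0 (pow_eq_zero_iff hs.ne' |>.mp hus)
      rw [mul_pow, inv_pow, hus, hxs, inv_mul_cancel₀ ha0]
    have hdN : orderOf (u₀⁻¹ * x) ∣ N := orderOf_dvd_of_pow_eq_one h1
    have hds : orderOf (u₀⁻¹ * x) ∣ s := orderOf_dvd_of_pow_eq_one h2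
    have : orderOf (u₀⁻¹ * x) ∣ t := ht ▸ Nat.dvd_gcd hds hdN
    exact orderOf_dvd_iff_pow_eq_one.mp this
  · intro w hw
    simp only [mem_filter, mem_univ, true_and] at hw ⊢
    constructor
    · rw [mul_pow, huN, one_mul]
      obtain ⟨c, hc⟩ := htN
      rw [hc, pow_mul, hw, one_pow]
    · rw [mul_pow, hus]
      obtain ⟨c, hc⟩ := hts
      rw [hc, pow_mul, hw, one_pow, mul_one]
  · intro x _; field_simp
  · intro w _; field_simp

theorem stmt_12 (p m n s t d : ℕ) (hp : p.Prime) (hp3 : p > 3)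
    (hm : 0 < m) (hn : n = 2 * m) (hs : 0 < s)
    (ht : t = Nat.gcd s (p ^ m + 1)) (hbig : (p ^ m + 1) / t > 3)
    (hd : d = s * (p ^ m - 1))
    (F : Type) [Field F] [Fintype F] [DecidableEq F] (hF : Fintype.card F = p ^ n) :
    (¬ (6 * t ∣ p ^ m + 1) →
      (Finset.univ.filter fun x : F => (x + 1) ^ d - x ^ d = 1).card = 1 ∧
      (Finset.univ.filter fun x : F => (x + 1) ^ d - x ^ d = -1).card = 1) ∧
    ((6 * t ∣ p ^ m + 1) →
      (Finset.univ.filter fun x : F => (x + 1) ^ d - x ^ d = 1).card = 2 * t ^ 2 + 1 ∧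
      (Finset.univ.filter fun x : F => (x + 1) ^ d - x ^ d = -1).card = 2 * t ^ 2 + 1) := by
  -- basic numerology
  have hp5 : 5 ≤ p := by
    have h4 : p ≠ 4 := by rintro rfl; norm_num at hp
    omega
  set q := p ^ m with hq
  have hq5 : 5 ≤ q := le_trans hp5 (Nat.le_self_pow hm.ne' p)
  have hqodd : Odd q := (hp.odd_of_ne_two (by omega)).pow
  -- characteristic
  have hchar : CharP F p := by
    obtain ⟨p', hp'⟩ := CharP.exists F
    haveI := hp'
    have hp'prime : p'.Prime := CharP.char_is_prime F p'
    obtain ⟨n', -, hcard'⟩ := FiniteField.card F p'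
    have hpq : p = p' := by
      have h1 : p ∣ p' ^ (n' : ℕ) := by
        rw [← hcard', hF]
        exact dvd_pow_self p (by omega)
      exact (Nat.prime_dvd_prime_iff_eq hp hp'prime).mp (hp.dvd_of_dvd_pow h1)
    rwa [hpq]
  haveI := hchar
  haveI : Fact p.Prime := ⟨hp⟩
  have h2ne : (2 : F) ≠ 0 := by
    intro h
    have h2 : p ∣ 2 := (CharP.cast_eq_zero_iff F p 2).mp (by exact_mod_cast h)
    have := Nat.le_of_dvd (by norm_num) h2
    omega
  have h3ne : (3 : F) ≠ 0 := by
    intro h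
    have h3 : p ∣ 3 := (CharP.cast_eq_zero_iff F p 3).mp (by exact_mod_cast h)
    have := Nat.le_of_dvd (by norm_num) h3
    omega
  have hcard : Fintype.card F = q ^ 2 := by
    rw [hF, hn, hq, ← pow_mul, mul_comm]
  -- frobenius
  have frob : ∀ x y : F, (x + y) ^ q = x ^ q + y ^ q := fun x y =>
    add_pow_char_pow (R := F) (x := x) (y := y) (p := p) (n := m)
  have frobs : ∀ x y : F, (x - y) ^ q = x ^ q - y ^ q := fun x y =>
    sub_pow_char_pow (R := F) (x := x) (y := y) (p := p) (n := m)
  set N := q + 1 with hN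
  have hN0 : 0 < N := by omega
  have ht0 : 0 < t := ht ▸ Nat.gcd_pos_of_pos_left _ hs
  have htN : t ∣ N := ht ▸ Nat.gcd_dvd_right s N
  have hts : t ∣ s := ht ▸ Nat.gcd_dvd_left s N
  set l := N / t with hl
  have hNtl : N = t * l := (Nat.mul_div_cancel' htN).symm
  have hl0 : 0 < l := Nat.div_pos (Nat.le_of_dvd hN0 htN) ht0
  have hcard1 : Fintype.card F - 1 = (q - 1) * (q + 1) := by
    rw [hcard, pow_two, Nat.sub_one_mul, Nat.mul_succ]
    omega
  have hNdvd : N ∣ Fintype.card F - 1 := by rw [hcard1]; exact dvd_mul_left _ _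
  -- d facts
  have hd0 : d ≠ 0 := by
    rw [hd]; exact Nat.mul_ne_zero hs.ne' (by omega)
  have hdeven : Even d := by
    rw [hd]
    apply Even.mul_left
    have : Odd q := hqodd
    rcases this with ⟨c, hc⟩
    exact ⟨c, by omega⟩
  have hxd : ∀ x : F, x ^ d = (x ^ (q - 1)) ^ s := fun x => by
    rw [hd, ← pow_mul, mul_comm]
  have hq1succ : q - 1 + 1 = q := by omega
  have hpow_unit : ∀ x : F, x ≠ 0 → (x ^ (q - 1)) ^ N = 1 := by
    intro x hx
    have h1 : x ^ (Fintype.card F - 1) = 1 := FiniteField.pow_card_sub_one_eq_one x hx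
    rw [← pow_mul]
    have h2 : (q - 1) * N = Fintype.card F - 1 := by rw [hcard1]
    rw [h2, h1]
  have hfrobq : ∀ x : F, x ^ q = x ^ (q - 1) * x := by
    intro x
    rw [← pow_succ, hq1succ]
  -- the sets
  set S1 := Finset.univ.filter fun x : F => (x + 1) ^ d - x ^ d = 1 with hS1
  set Sm1 := Finset.univ.filter fun x : F => (x + 1) ^ d - x ^ d = -1 with hSm1
  set P := Finset.univ.filter
    (fun w : F × F => w.1 ^ N = 1 ∧ w.2 ^ N = 1 ∧ w.2 ^ s - w.1 ^ s = 1) with hP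
  set Q := Finset.univ.filter
    (fun w : F × F => w.1 ^ l = 1 ∧ w.2 ^ l = 1 ∧ w.2 - w.1 = 1) with hQ
  set Q1 := Finset.univ.filter (fun a : F => a ^ l = 1 ∧ (a + 1) ^ l = 1) with hQ1
  -- step: Sm1.card = S1.card
  have hSm : Sm1.card = S1.card := by
    apply Finset.card_nbij' (fun x => -1 - x) (fun x => -1 - x)
    · intro x hx
      simp only [hSm1, hS1, mem_coe, mem_filter, mem_univ, true_and] at hx ⊢
      rw [show (-1 - x + 1 : F) = -x by ring, show (-1 - x : F) = -(x + 1) by ring,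
        hdeven.neg_pow x, hdeven.neg_pow (x + 1)]
      linear_combination -hx
    · intro x hx
      simp only [hSm1, hS1, mem_coe, mem_filter, mem_univ, true_and] at hx ⊢
      rw [show (-1 - x + 1 : F) = -x by ring, show (-1 - x : F) = -(x + 1) by ring,
        hdeven.neg_pow x, hdeven.neg_pow (x + 1)]
      linear_combination -hx
    · intro x _; ring
    · intro x _; ring
  -- reconstruction of x from a pair (u,v)
  have hrecon : ∀ u v : F, u ^ N = 1 → v ^ N = 1 → v ^ s - u ^ s = 1 →
      ((v - 1) / (u - v) ≠ 0 ∧ ((v - 1) / (u - v)) ^ (q - 1) = u ∧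
       ((v - 1) / (u - v) + 1) ^ (q - 1) = v) := by
    intro u v huN hvN heq
    have hu0 : u ≠ 0 := by
      intro h; rw [h, zero_pow hN0.ne'] at huN; exact zero_ne_one huN
    have hv0 : v ≠ 0 := by
      intro h; rw [h, zero_pow hN0.ne'] at hvN; exact zero_ne_one hvN
    have huv : u - v ≠ 0 := by
      intro h
      have h1 : u = v := by linear_combination h
      rw [h1, sub_self] at heq
      exact zero_ne_one heq
    have hv1 : v - 1 ≠ 0 := by
      intro h
      have h1 : v = 1 := by linear_combination h
      rw [h1, one_pow] at heq
      have h2 : u ^ s = 0 := by linear_combination -heq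
      exact hu0 ((pow_eq_zero_iff hs.ne').mp h2)
    have hu1 : u - 1 ≠ 0 := by
      intro h
      have h1 : u = 1 := by linear_combination h
      rw [h1, one_pow] at heq
      have h2 : v ^ s = 2 := by linear_combination heq
      have h2N : (2 : F) ^ N = 1 := by
        rw [← h2, ← pow_mul, mul_comm, pow_mul, hvN, one_pow]
      have h2q : (2 : F) ^ q = 2 := by
        have h3 : ((1 : F) + 1) ^ q = 1 ^ q + 1 ^ q := frob 1 1
        rw [one_pow] at h3
        norm_num at h3
        exact h3
      have h4 : (2 : F) ^ N = 4 := by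
        rw [hN, pow_succ, h2q]; norm_num
      rw [h4] at h2N
      exact h3ne (by linear_combination h2N)
    have huq : u ^ q = u⁻¹ := by
      have h1 : u ^ q * u = 1 := by rw [← pow_succ]; exact huN
      exact eq_inv_of_mul_eq_one_left (by linear_combination h1)
    have hvq : v ^ q = v⁻¹ := by
      have h1 : v ^ q * v = 1 := by rw [← pow_succ]; exact hvN
      exact eq_inv_of_mul_eq_one_left (by linear_combination h1)
    set x := (v - 1) / (u - v) with hxdef
    have hx0 : x ≠ 0 := div_ne_zero hv1 huv
    have hinvne : u⁻¹ - v⁻¹ ≠ 0 := by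
      intro h
      apply huv
      have h1 : u⁻¹ = v⁻¹ := by linear_combination h
      have h2 : u = v := inv_injective h1
      linear_combination h2
    have hxq : x ^ q = u * x := by
      rw [hxdef, div_pow, frobs v 1, frobs u v, one_pow, huq, hvq, ← mul_div_assoc,
        div_eq_div_iff hinvne huv]
      field_simp
      ring
    have hxq1 : x ^ (q - 1) = u := by
      have h1 : x ^ (q - 1) * x = u * x := by rw [← pow_succ, hq1succ]; exact hxq
      exact mul_right_cancel₀ hx0 h1
    have hxuv : x * (u - v) = v - 1 := by
      rw [hxdef]; field_simp
    have hx1e : x + 1 = (u - 1) / (u - v) := by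
      rw [hxdef, div_add' _ _ _ huv]
      congr 1
      ring
    have hx10 : x + 1 ≠ 0 := by rw [hx1e]; exact div_ne_zero hu1 huv
    have hx1q : (x + 1) ^ q = v * (x + 1) := by
      rw [frob x 1, one_pow, hxq]
      linear_combination hxuv
    have hx1q1 : (x + 1) ^ (q - 1) = v := by
      have h1 : (x + 1) ^ (q - 1) * (x + 1) = v * (x + 1) := by
        rw [← pow_succ, hq1succ]; exact hx1q
      exact mul_right_cancel₀ hx10 h1
    exact ⟨hx0, hxq1, hx1q1⟩
  -- step: S1.card = P.card + 1
  have hS1P : S1.card = P.card + 1 := by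
    have h0mem : (0 : F) ∈ S1 := by
      simp only [hS1, mem_filter, mem_univ, true_and]
      rw [zero_add, one_pow, zero_pow hd0, sub_zero]
    rw [← Finset.card_erase_add_one h0mem]
    congr 1
    apply Finset.card_nbij' (fun x => (x ^ (q - 1), (x + 1) ^ (q - 1)))
      (fun w => (w.2 - 1) / (w.1 - w.2))
    · intro x hx
      simp only [hS1, mem_coe, mem_erase, mem_filter, mem_univ, true_and] at hx
      obtain ⟨hx0, hxe⟩ := hx
      have hx1 : x + 1 ≠ 0 := by
        intro h
        rw [show x = -1 by linear_combination h] at hxe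
        rw [show (-1 : F) + 1 = 0 by ring, zero_pow hd0, hdeven.neg_pow, one_pow] at hxe
        exact h2ne (by linear_combination -hxe)
      simp only [hP, mem_coe, mem_filter, mem_univ, true_and]
      exact ⟨hpow_unit x hx0, hpow_unit (x + 1) hx1, by rw [← hxd, ← hxd]; exact hxe⟩
    · intro w hw
      simp only [hP, mem_coe, mem_filter, mem_univ, true_and] at hw
      obtain ⟨h1, h2, h3⟩ := hw
      obtain ⟨hx0, hxq1, hx1q1⟩ := hrecon w.1 w.2 h1 h2 h3
      simp only [hS1, mem_coe, mem_erase, mem_filter, mem_univ, true_and]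
      exact ⟨hx0, by rw [hxd, hxd, hxq1, hx1q1]; exact h3⟩
    · intro x hx
      simp only [hS1, mem_coe, mem_erase, mem_filter, mem_univ, true_and] at hx
      obtain ⟨hx0, hxe⟩ := hx
      have hxe' : ((x + 1) ^ (q - 1)) ^ s - (x ^ (q - 1)) ^ s = 1 := by
        rw [← hxd, ← hxd]; exact hxe
      have huv : x ^ (q - 1) - (x + 1) ^ (q - 1) ≠ 0 := by
        intro h
        rw [show x ^ (q - 1) = (x + 1) ^ (q - 1) by linear_combination h, sub_self] at hxe'
        exact zero_ne_one hxe'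
      have h1 : x ^ q = x ^ (q - 1) * x := hfrobq x
      have h2 : (x + 1) ^ q = (x + 1) ^ (q - 1) * (x + 1) := hfrobq (x + 1)
      have h3 : (x + 1) ^ q = x ^ q + 1 := by rw [frob x 1, one_pow]
      have hxuv : x * (x ^ (q - 1) - (x + 1) ^ (q - 1)) = (x + 1) ^ (q - 1) - 1 := by
        linear_combination -h1 + h2 - h3
      show ((x + 1) ^ (q - 1) - 1) / (x ^ (q - 1) - (x + 1) ^ (q - 1)) = x
      rw [div_eq_iff huv]
      linear_combination -hxuv
    · intro w hw
      simp only [hP, mem_coe, mem_filter, mem_univ, true_and] at hw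
      obtain ⟨h1, h2, h3⟩ := hw
      obtain ⟨hx0, hxq1, hx1q1⟩ := hrecon w.1 w.2 h1 h2 h3
      exact Prod.ext hxq1 hx1q1
  -- step: P.card = Q.card * (t * t)
  have hPQ : P.card = Q.card * (t * t) := by
    have hmaps : ∀ w ∈ P, ((w.1 ^ s, w.2 ^ s) : F × F) ∈ Q := by
      intro w hw
      simp only [hP, hQ, mem_filter, mem_univ, true_and] at hw ⊢
      obtain ⟨h1, h2, h3⟩ := hw
      obtain ⟨s₁, hs₁⟩ := hts
      have e : ∀ x : F, x ^ N = 1 → (x ^ s) ^ l = 1 := by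
        intro x hx
        rw [← pow_mul, hs₁, show t * s₁ * l = N * s₁ by rw [hNtl]; ring,
          pow_mul, hx, one_pow]
      exact ⟨e _ h1, e _ h2, h3⟩
    rw [Finset.card_eq_sum_card_fiberwise hmaps]
    have hfib : ∀ ac ∈ Q, (P.filter fun w => ((w.1 ^ s, w.2 ^ s) : F × F) = ac).card = t * t := by
      intro ac hac
      simp only [hQ, mem_filter, mem_univ, true_and] at hac
      obtain ⟨ha, hc, hac1⟩ := hac
      have heq : (P.filter fun w => ((w.1 ^ s, w.2 ^ s) : F × F) = ac)
          = (Finset.univ.filter fun u : F => u ^ N = 1 ∧ u ^ s = ac.1) ×ˢ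
            (Finset.univ.filter fun v : F => v ^ N = 1 ∧ v ^ s = ac.2) := by
        ext w
        simp only [hP, mem_filter, mem_univ, true_and, mem_product, Prod.ext_iff]
        constructor
        · rintro ⟨⟨hh1, hh2, hh3⟩, hh4, hh5⟩
          exact ⟨⟨hh1, hh4⟩, hh2, hh5⟩
        · rintro ⟨⟨hh1, hh4⟩, hh2, hh5⟩
          refine ⟨⟨hh1, hh2, ?_⟩, hh4, hh5⟩
          rw [hh4, hh5]; exact hac1
      rw [heq, Finset.card_product]
      rw [fiber_card F hs hN0 hNdvd ht ac.1 (by rw [← hl]; exact ha),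
        fiber_card F hs hN0 hNdvd ht ac.2 (by rw [← hl]; exact hc)]
    calc (∑ ac ∈ Q, (P.filter fun w => ((w.1 ^ s, w.2 ^ s) : F × F) = ac).card)
        = ∑ _ac ∈ Q, t * t := Finset.sum_congr rfl hfib
      _ = Q.card * (t * t) := by rw [Finset.sum_const, smul_eq_mul]
  -- step: Q.card = Q1.card
  have hQQ1 : Q.card = Q1.card := by
    apply Finset.card_nbij' (fun w => w.1) (fun a => (a, a + 1))
    · intro w hw
      simp only [hQ, hQ1, mem_coe, mem_filter, mem_univ, true_and] at hw ⊢
      obtain ⟨h1, h2, h3⟩ := hw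
      have : w.2 = w.1 + 1 := by linear_combination h3
      exact ⟨h1, this ▸ h2⟩
    · intro a ha
      simp only [hQ, hQ1, mem_coe, mem_filter, mem_univ, true_and] at ha ⊢
      exact ⟨ha.1, ha.2, by ring⟩
    · intro w hw
      simp only [hQ, mem_coe, mem_filter, mem_univ, true_and] at hw
      have : w.2 = w.1 + 1 := by linear_combination hw.2.2
      exact Prod.ext rfl this.symm
    · intro a _; rfl
  -- key quadratic fact for elements of Q1
  have hQ1key : ∀ a : F, a ^ l = 1 → (a + 1) ^ l = 1 →
      a ^ 2 + a + 1 = 0 ∧ (-1 : F) ^ l = 1 := by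
    intro a hal hal1
    have ha0 : a ≠ 0 := by
      intro h; rw [h, zero_pow hl0.ne'] at hal; exact zero_ne_one hal
    have haN : a ^ N = 1 := by rw [hNtl, mul_comm, pow_mul, hal, one_pow]
    have ha1N : (a + 1) ^ N = 1 := by rw [hNtl, mul_comm, pow_mul, hal1, one_pow]
    have haq : a ^ q * a = 1 := by rw [← pow_succ]; exact haN
    have hfr : (a + 1) ^ q = a ^ q + 1 := by rw [frob a 1, one_pow]
    have h2 : (a ^ q + 1) * (a + 1) = 1 := by
      rw [← hfr, ← pow_succ]; exact ha1N
    have key : a ^ 2 + a + 1 = 0 := by linear_combination (-a - 1) * haq + a * h2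
    refine ⟨key, ?_⟩
    have he : a + 1 = -1 * a ^ 2 := by linear_combination key
    have : ((-1 : F) * a ^ 2) ^ l = 1 := by rw [← he]; exact hal1
    rw [mul_pow, ← pow_mul, mul_comm 2 l, pow_mul, hal, one_pow, mul_one] at this
    exact this
  -- the two cases for Q1
  constructor
  · intro hnot
    have hQ1empty : Q1 = ∅ := by
      rw [Finset.eq_empty_iff_forall_notMem]
      intro a ha
      simp only [hQ1, mem_filter, mem_univ, true_and] at ha
      obtain ⟨key, hneg⟩ := hQ1key a ha.1 ha.2
      have ha1 : a ≠ 1 := by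
        intro h
        rw [h] at key
        apply h3ne
        linear_combination key
      have ha3 : a ^ 3 = 1 := by linear_combination (a - 1) * key
      haveI : Fact (Nat.Prime 3) := ⟨by norm_num⟩
      have hord : orderOf a = 3 := orderOf_eq_prime ha3 ha1
      have h3l : 3 ∣ l := hord ▸ orderOf_dvd_of_pow_eq_one ha.1
      have h2l : 2 ∣ l := by
        rcases Nat.even_or_odd l with he | ho
        · exact he.two_dvd
        · exfalso
          rw [ho.neg_one_pow] at hneg
          apply h2ne
          linear_combination -hneg
      have h6l : 6 ∣ l := Nat.Coprime.mul_dvd_of_dvd_of_dvd (by norm_num) h2l h3l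
      apply hnot
      obtain ⟨c, hc⟩ := h6l
      exact ⟨c, by rw [hNtl, hc]; ring⟩
    have hS1card : S1.card = 1 := by
      rw [hS1P, hPQ, hQQ1, hQ1empty]
      simp
    exact ⟨hS1card, by rw [hSm, hS1card]⟩
  · intro hdvd6
    have hQ1card : Q1.card = 2 := by
      have h6l : 6 ∣ l := by
        obtain ⟨c, hc⟩ := hdvd6
        refine ⟨c, ?_⟩
        have : t * l = t * (6 * c) := by rw [← hNtl, hc]; ring
        exact Nat.eq_of_mul_eq_mul_left ht0 this
      have h3l : 3 ∣ l := by omega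
      have hleven : Even l := by
        have : 2 ∣ l := by omega
        exact (even_iff_two_dvd).mpr this
      have hdvd3 : 3 ∣ Fintype.card Fˣ := by
        rw [Fintype.card_units]
        exact dvd_trans h3l (dvd_trans (Dvd.intro_left t hNtl.symm) hNdvd)
      haveI : Fact (Nat.Prime 3) := ⟨by norm_num⟩
      obtain ⟨ωu, hωu⟩ := exists_prime_orderOf_dvd_card (G := Fˣ) 3 hdvd3
      set w : F := ((ωu : Fˣ) : F) with hwdef
      have hordw : orderOf w = 3 := by rw [hwdef, orderOf_units]; exact hωu
      have hw3 : w ^ 3 = 1 := by rw [← hordw]; exact pow_orderOf_eq_one w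
      have hw1 : w ≠ 1 := by
        intro h
        rw [h, orderOf_one] at hordw
        omega
      have hw0 : w ≠ 0 := Units.ne_zero ωu
      have wkey : w ^ 2 + w + 1 = 0 := by
        have hfac : (w - 1) * (w ^ 2 + w + 1) = 0 := by linear_combination hw3
        rcases mul_eq_zero.mp hfac with h | h
        · exact absurd (by linear_combination h) hw1
        · exact h
      obtain ⟨c3, hc3⟩ := h3l
      have hwl : w ^ l = 1 := by rw [hc3, pow_mul, hw3, one_pow]
      have hw2l : (w ^ 2) ^ l = 1 := by
        rw [← pow_mul, mul_comm 2 l, pow_mul, hwl, one_pow]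
      have hQ1eq : Q1 = {w, w ^ 2} := by
        ext a
        simp only [hQ1, mem_filter, mem_univ, true_and, mem_insert, mem_singleton]
        constructor
        · rintro ⟨hal, hal1⟩
          obtain ⟨akey, -⟩ := hQ1key a hal hal1
          have hfac : (a - w) * (a + w + 1) = 0 := by linear_combination akey - wkey
          rcases mul_eq_zero.mp hfac with h | h
          · left; linear_combination h
          · right; linear_combination h - wkey
        · rintro (rfl | rfl)
          · refine ⟨hwl, ?_⟩
            have he : w + 1 = -(w ^ 2) := by linear_combination wkey
            rw [he, hleven.neg_pow, hw2l]
          · refine ⟨hw2l, ?_⟩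
            have he : w ^ 2 + 1 = -w := by linear_combination wkey
            rw [he, hleven.neg_pow, hwl]
      rw [hQ1eq]
      rw [Finset.card_insert_of_notMem, Finset.card_singleton]
      rw [Finset.mem_singleton]
      intro h
      have hfac : w * (w - 1) = 0 := by linear_combination -h
      rcases mul_eq_zero.mp hfac with h' | h'
      · exact hw0 h'
      · exact hw1 (by linear_combination h')
    have hS1card : S1.card = 2 * t ^ 2 + 1 := by
      rw [hS1P, hPQ, hQQ1, hQ1card]
      ring
    exact ⟨hS1card, by rw [hSm, hS1card]⟩
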